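/- Let P and Q be positive joint distributions on 𝒳 × 𝒴, let P* be a minimizer of min{ D(P̃‖Q) : P̃ a joint distribution with P̃_X = P_X and P̃_Y = P_Y }, and define ȷ(x,y) = log(P*(x,y)/Q(x,y)). Then E(P̄‖Q) = Σ_{x,y} P̄(x,y)·ȷ(x,y) + o(‖P̄ − P‖) as P̄ → P: for every ε > 0 there exists δ > 0 such that every joint distribution P̄ on 𝒳 × 𝒴 with ‖P̄ − P‖ := Σ_{x,y} |P̄(x,y) − P(x,y)| < δ satisfies |E(P̄‖Q) − Σ_{x,y} P̄(x,y)·ȷ(x,y)| ≤ ε·‖P̄ − P‖. -/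

import Mathlib

open scoped Classical BigOperators

noncomputable section

variable {X Y : Type*} [Fintype X] [Fintype Y]

/-- `P` is a joint distribution on `X × Y`. -/
def IsDist (P : X × Y → ℝ) : Prop :=
  (∀ z, 0 ≤ P z) ∧ ∑ z : X × Y, P z = 1

/-- `P` is a positive joint distribution on `X × Y`. -/
def IsPos (P : X × Y → ℝ) : Prop :=
  (∀ z, 0 < P z) ∧ ∑ z : X × Y, P z = 1

/-- The first marginal of a joint distribution. -/
def margX (P : X × Y → ℝ) (x : X) : ℝ := ∑ y : Y, P (x, y)

/-- The second marginal of a joint distribution. -/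
def margY (P : X × Y → ℝ) (y : Y) : ℝ := ∑ x : X, P (x, y)

/-- Relative entropy `D(P‖Q)` (natural log; `Real.log 0 = 0` realizes `0·log 0 = 0`). -/
def relEnt (P Q : X × Y → ℝ) : ℝ := ∑ z : X × Y, P z * Real.log (P z / Q z)

/-- Projected relative entropy `E(P‖Q)`. -/
def projE (P Q : X × Y → ℝ) : ℝ :=
  sInf { d : ℝ | ∃ P' : X × Y → ℝ,
    IsDist P' ∧ margX P' = margX P ∧ margY P' = margY P ∧ d = relEnt P' Q }

/-- `R ∈ ℰ^{xy}(S)` : `R` has the same correlation coordinates as `S`. -/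
def SameCorr (R S : X × Y → ℝ) : Prop :=
  ∃ a1 : X → ℝ, ∃ a2 : Y → ℝ,
    ∀ x : X, ∀ y : Y, Real.log (R (x, y) / S (x, y)) = a1 x + a2 y

/-- The type (empirical distribution) of a sequence. -/
def empDist {n : ℕ} (x : Fin n → X) (a : X) : ℝ :=
  ((Finset.univ.filter fun i => x i = a).card : ℝ) / n

/-- The joint type of a pair of sequences. -/
def empJoint {n : ℕ} (x : Fin n → X) (y : Fin n → Y) (z : X × Y) : ℝ :=
  ((Finset.univ.filter fun i => x i = z.1 ∧ y i = z.2).card : ℝ) / n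

/-- Probability of a set under the `n`-fold i.i.d. product of `P`. -/
def prodProb (P : X × Y → ℝ) (n : ℕ) (A : Set ((Fin n → X) × (Fin n → Y))) : ℝ :=
  ∑ z : (Fin n → X) × (Fin n → Y),
    if z ∈ A then ∏ i : Fin n, P (z.1 i, z.2 i) else 0

/-- `P` is a joint type with denominator `n` (an element of `𝒫ₙ(𝒳 × 𝒴)`). -/
def IsTypeN (n : ℕ) (P : X × Y → ℝ) : Prop :=
  IsDist P ∧ ∀ z : X × Y, ∃ k : ℕ, P z = (k : ℝ) / n

/-- `Eₙ(P̄‖Q)` : projected relative entropy restricted to joint types. -/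
def En (n : ℕ) (Pbar Q : X × Y → ℝ) : ℝ :=
  sInf { d : ℝ | ∃ Pt : X × Y → ℝ,
    IsTypeN n Pt ∧ margX Pt = margX Pbar ∧ margY Pt = margY Pbar ∧ d = relEnt Pt Q }

/-- Standard normal cumulative distribution function `Φ`. -/
def stdNormalCDF (t : ℝ) : ℝ :=
  ∫ u in Set.Iic t, (Real.sqrt (2 * Real.pi))⁻¹ * Real.exp (-(u ^ 2) / 2)

/-- Inverse of the standard normal CDF, `Φ⁻¹`. -/
def stdNormalCDFInv (e : ℝ) : ℝ := Function.invFun stdNormalCDF e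

/-!
The minimizer `P*` is positive: mixing a little of the positive `P` into `P*` changes the
term of a vanishing entry by `t log t`, whose slope `-∞` at `0` beats the linear change of all
other terms. Hence `P*` is an interior minimum over the distributions with the marginals of `P`,
so it is stationary along every direction with zero marginals; the rectangle directions
`δ(x,y) - δ(x,y') - δ(x',y) + δ(x',y')` show that `ȷ(x,y) = a(x) + b(y)`, so `Σ R ȷ` depends on
`R` only through its marginals. The chain rule `D(R‖Q) = D(R‖P*) + Σ R ȷ` then gives
`E(P̄‖Q) ≥ Σ P̄ ȷ`, and the competitor `P* + (P̄ - P)`, whose divergence from `P*` is at most the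
`χ²`-distance `Σ (P̄ - P)² / P* = O(‖P̄ - P‖²)`, gives the matching upper bound.
-/

open Real Filter Topology

lemma sub_le_mul_log_div {p q : ℝ} (hp : 0 ≤ p) (hq : 0 < q) : p - q ≤ p * log (p / q) := by
  rcases hp.eq_or_lt with rfl | hp
  · simp [hq.le]
  · have h := one_sub_inv_le_log_of_pos (div_pos hp hq)
    rw [inv_div] at h
    calc p - q = p * (1 - q / p) := by field_simp
      _ ≤ p * log (p / q) := mul_le_mul_of_nonneg_left h hp.le

lemma mul_log_div_le_sub_add_sq_div {p q : ℝ} (hp : 0 ≤ p) (hq : 0 < q) :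
    p * log (p / q) ≤ p - q + (p - q) ^ 2 / q := by
  calc p * log (p / q) ≤ p * (p / q - 1) := by
        rcases hp.eq_or_lt with rfl | hp
        · simp
        · exact mul_le_mul_of_nonneg_left (log_le_sub_one_of_pos (div_pos hp hq)) hp.le
    _ = p - q + (p - q) ^ 2 / q := by field_simp; ring

lemma mul_log_div_convexComb_le {a b q t : ℝ} (ha : 0 ≤ a) (hb : 0 ≤ b) (hq : 0 < q)
    (ht0 : 0 ≤ t) (ht1 : t ≤ 1) :
    ((1 - t) * a + t * b) * log (((1 - t) * a + t * b) / q)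
      ≤ (1 - t) * (a * log (a / q)) + t * (b * log (b / q)) := by
  have key := convexOn_mul_log.2 (Set.mem_Ici.2 (div_nonneg ha hq.le))
    (Set.mem_Ici.2 (div_nonneg hb hq.le)) (sub_nonneg.2 ht1) ht0 (sub_add_cancel 1 t)
  simp only [smul_eq_mul] at key
  rw [show (1 - t) * (a / q) + t * (b / q) = ((1 - t) * a + t * b) / q by ring] at key
  calc _ = q * (((1 - t) * a + t * b) / q * log (((1 - t) * a + t * b) / q)) := by field_simp
    _ ≤ q * ((1 - t) * (a / q * log (a / q)) + t * (b / q * log (b / q))) :=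
        mul_le_mul_of_nonneg_left key hq.le
    _ = _ := by field_simp

lemma mul_log_mul_div_eq_add {b q t : ℝ} (ht : t ≠ 0) (hq : q ≠ 0) :
    t * b * log (t * b / q) = t * (b * log (b / q)) + t * b * log t := by
  rcases eq_or_ne b 0 with rfl | hb
  · simp
  · rw [mul_div_assoc, log_mul ht (div_ne_zero hb hq)]; ring

lemma eq_zero_of_eventually_nonneg_mul_sq_add_mul {C a : ℝ}
    (h : ∀ᶠ t in 𝓝 0, 0 ≤ C * t ^ 2 + a * t) : a = 0 := by
  have hmin : IsLocalMin (fun t => C * t ^ 2 + a * t) 0 := h.mono fun t ht => by simpa using ht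
  simpa using hmin.hasDerivAt_eq_zero
    (((hasDerivAt_pow 2 0).const_mul C).add ((hasDerivAt_id 0).const_mul a))

lemma sum_sq_div_le_sq_sum_abs_div {α : Type*} [Fintype α] {d S : α → ℝ} {m : ℝ} (hm : 0 < m)
    (hS : ∀ z, m ≤ S z) : ∑ z, d z ^ 2 / S z ≤ (∑ z, |d z|) ^ 2 / m :=
  calc ∑ z, d z ^ 2 / S z ≤ ∑ z, |d z| ^ 2 / m := Finset.sum_le_sum fun z _ => by
        rw [sq_abs]; exact div_le_div_of_nonneg_left (sq_nonneg _) hm (hS z)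
    _ ≤ _ := by
        rw [← Finset.sum_div]
        exact div_le_div_of_nonneg_right
          (Finset.sum_sq_le_sq_sum_of_nonneg fun z _ => abs_nonneg _) hm.le

omit [Fintype X] in
lemma margX_add (f g : X × Y → ℝ) : margX (f + g) = margX f + margX g :=
  funext fun _ => Finset.sum_add_distrib

omit [Fintype Y] in
lemma margY_add (f g : X × Y → ℝ) : margY (f + g) = margY f + margY g :=
  funext fun _ => Finset.sum_add_distrib

omit [Fintype X] in
lemma margX_sub (f g : X × Y → ℝ) : margX (f - g) = margX f - margX g :=
  funext fun _ => Finset.sum_sub_distrib _ _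

omit [Fintype Y] in
lemma margY_sub (f g : X × Y → ℝ) : margY (f - g) = margY f - margY g :=
  funext fun _ => Finset.sum_sub_distrib _ _

omit [Fintype X] in
lemma margX_smul (c : ℝ) (f : X × Y → ℝ) : margX (c • f) = c • margX f :=
  funext fun _ => (Finset.mul_sum _ _ _).symm

omit [Fintype Y] in
lemma margY_smul (c : ℝ) (f : X × Y → ℝ) : margY (c • f) = c • margY f :=
  funext fun _ => (Finset.mul_sum _ _ _).symm

lemma sum_eq_of_margX_eq {R R' : X × Y → ℝ} (h : margX R = margX R') :
    ∑ z, R z = ∑ z, R' z := by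
  simp only [Fintype.sum_prod_type]
  exact congrArg (fun f => ∑ x, f x) h

lemma isDist_of_margX_eq {R P : X × Y → ℝ} (hR : ∀ z, 0 ≤ R z) (hP : IsDist P)
    (h : margX R = margX P) : IsDist R :=
  ⟨hR, (sum_eq_of_margX_eq h).trans hP.2⟩

lemma sum_mul_add_eq (R : X × Y → ℝ) (a : X → ℝ) (b : Y → ℝ) :
    ∑ z, R z * (a z.1 + b z.2) = ∑ x, margX R x * a x + ∑ y, margY R y * b y := by
  simp only [mul_add, Finset.sum_add_distrib, margX, margY, Finset.sum_mul, Fintype.sum_prod_type]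
  rw [Finset.sum_comm (f := fun x y => R (x, y) * b y)]

lemma SameCorr.sum_mul_log_div_eq {S Q R R' : X × Y → ℝ} (hc : SameCorr S Q)
    (hX : margX R = margX R') (hY : margY R = margY R') :
    ∑ z, R z * log (S z / Q z) = ∑ z, R' z * log (S z / Q z) := by
  obtain ⟨a, b, hab⟩ := hc
  have hab' : ∀ z : X × Y, log (S z / Q z) = a z.1 + b z.2 := fun z => hab z.1 z.2
  simp only [hab', sum_mul_add_eq, hX, hY]

lemma relEnt_nonneg {R S : X × Y → ℝ} (hR : ∀ z, 0 ≤ R z) (hS : ∀ z, 0 < S z)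
    (h : ∑ z, R z = ∑ z, S z) : 0 ≤ relEnt R S := by
  have := Finset.sum_le_sum fun z (_ : z ∈ Finset.univ) => sub_le_mul_log_div (hR z) (hS z)
  rwa [Finset.sum_sub_distrib, h, sub_self] at this

lemma relEnt_le_sum_sq_div {R S : X × Y → ℝ} (hR : ∀ z, 0 ≤ R z) (hS : ∀ z, 0 < S z)
    (h : ∑ z, R z = ∑ z, S z) : relEnt R S ≤ ∑ z, (R z - S z) ^ 2 / S z :=
  calc relEnt R S ≤ ∑ z, (R z - S z + (R z - S z) ^ 2 / S z) :=
        Finset.sum_le_sum fun z _ => mul_log_div_le_sub_add_sq_div (hR z) (hS z)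
    _ = _ := by rw [Finset.sum_add_distrib, Finset.sum_sub_distrib, h, sub_self, zero_add]

lemma relEnt_eq_relEnt_add_sum {R S Q : X × Y → ℝ} (hS : ∀ z, S z ≠ 0) (hQ : ∀ z, Q z ≠ 0) :
    relEnt R Q = relEnt R S + ∑ z, R z * log (S z / Q z) := by
  rw [relEnt, relEnt, ← Finset.sum_add_distrib]
  refine Finset.sum_congr rfl fun z _ => ?_
  rcases eq_or_ne (R z) 0 with h | h
  · simp [h]
  · rw [← mul_add, ← log_mul (div_ne_zero h (hS z)) (div_ne_zero (hS z) (hQ z)),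
      div_mul_div_cancel₀ (hS z)]

lemma relEnt_add_le {S D Q : X × Y → ℝ} (hS : ∀ z, 0 < S z) (hQ : ∀ z, 0 < Q z)
    (hSD : ∀ z, 0 ≤ S z + D z) (hD : ∑ z, D z = 0) :
    relEnt (S + D) Q ≤ relEnt S Q + ∑ z, D z * log (S z / Q z) + ∑ z, D z ^ 2 / S z := by
  have hchi : relEnt (S + D) S ≤ ∑ z, D z ^ 2 / S z := by
    simpa using relEnt_le_sum_sq_div (R := S + D) hSD hS (by simp [Finset.sum_add_distrib, hD])
  have hSQ : relEnt S Q = ∑ z, S z * log (S z / Q z) := rfl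
  rw [relEnt_eq_relEnt_add_sum (fun z => (hS z).ne') (fun z => (hQ z).ne')]
  simp only [Pi.add_apply, add_mul, Finset.sum_add_distrib]
  linarith

lemma relEnt_convexComb_le {R₀ R₁ Q : X × Y → ℝ} {t : ℝ} {z₀ : X × Y} (hR₀ : ∀ z, 0 ≤ R₀ z)
    (hR₁ : ∀ z, 0 ≤ R₁ z) (hQ : ∀ z, 0 < Q z) (ht0 : 0 < t) (ht1 : t ≤ 1) (hz₀ : R₀ z₀ = 0) :
    relEnt ((1 - t) • R₀ + t • R₁) Q
      ≤ (1 - t) * relEnt R₀ Q + t * relEnt R₁ Q + t * R₁ z₀ * log t := by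
  have hterm : ∀ z, ((1 - t) • R₀ + t • R₁) z * log (((1 - t) • R₀ + t • R₁) z / Q z)
      ≤ (1 - t) * (R₀ z * log (R₀ z / Q z)) + t * (R₁ z * log (R₁ z / Q z))
        + if z = z₀ then t * R₁ z₀ * log t else 0 := by
    intro z
    simp only [Pi.add_apply, Pi.smul_apply, smul_eq_mul]
    split_ifs with h
    · subst h
      simp only [hz₀, mul_zero, zero_add, zero_div, log_zero]
      exact (mul_log_mul_div_eq_add ht0.ne' (hQ z).ne').le
    · simpa using mul_log_div_convexComb_le (hR₀ z) (hR₁ z) (hQ z) ht0.le ht1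
  calc _ ≤ _ := Finset.sum_le_sum fun z _ => hterm z
    _ = _ := by
        simp only [Finset.sum_add_distrib, Finset.sum_ite_eq', Finset.mem_univ, if_true,
          ← Finset.mul_sum]
        rfl

lemma projE_le_relEnt {P Q R : X × Y → ℝ} (hQ : IsPos Q) (hR : IsDist R)
    (hX : margX R = margX P) (hY : margY R = margY P) : projE P Q ≤ relEnt R Q :=
  csInf_le ⟨0, by
    rintro _ ⟨R', hR', -, -, rfl⟩
    exact relEnt_nonneg hR'.1 hQ.1 (hR'.2.trans hQ.2.symm)⟩ ⟨R, hR, hX, hY, rfl⟩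

lemma le_projE {P Q : X × Y → ℝ} {c : ℝ} (hP : IsDist P)
    (h : ∀ R, IsDist R → margX R = margX P → margY R = margY P → c ≤ relEnt R Q) :
    c ≤ projE P Q :=
  le_csInf ⟨_, P, hP, rfl, rfl, rfl⟩ fun _ ⟨R, hR, hX, hY, hd⟩ => hd ▸ h R hR hX hY

lemma sum_mul_log_div_le_projE {S Q P : X × Y → ℝ} (hS : IsPos S) (hQ : ∀ z, 0 < Q z)
    (hc : SameCorr S Q) (hP : IsDist P) : ∑ z, P z * log (S z / Q z) ≤ projE P Q :=
  le_projE hP fun R hR hX hY => by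
    rw [relEnt_eq_relEnt_add_sum (fun z => (hS.1 z).ne') (fun z => (hQ z).ne'),
      hc.sum_mul_log_div_eq hX hY]
    linarith [relEnt_nonneg hR.1 hS.1 (hR.2.trans hS.2.symm)]

def rectDir (x x' : X) (y y' : Y) : X × Y → ℝ :=
  fun z => (Pi.single x 1 - Pi.single x' 1 : X → ℝ) z.1
    * (Pi.single y 1 - Pi.single y' 1 : Y → ℝ) z.2

omit [Fintype X] in
lemma margX_rectDir (x x' : X) (y y' : Y) : margX (rectDir x x' y y') = 0 :=
  funext fun _ => by simp [margX, rectDir, ← Finset.mul_sum, Finset.sum_sub_distrib]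

omit [Fintype Y] in
lemma margY_rectDir (x x' : X) (y y' : Y) : margY (rectDir x x' y y') = 0 :=
  funext fun _ => by simp [margY, rectDir, ← Finset.sum_mul, Finset.sum_sub_distrib]

lemma sum_rectDir_mul (x x' : X) (y y' : Y) (f : X × Y → ℝ) :
    ∑ z, rectDir x x' y y' z * f z = f (x, y) - f (x, y') - f (x', y) + f (x', y') := by
  simp only [rectDir, Pi.sub_apply, Pi.single_apply, mul_sub, mul_ite, mul_one, mul_zero, sub_mul,
    ite_mul, one_mul, zero_mul, Finset.sum_sub_distrib, Fintype.sum_prod_type, Finset.sum_ite_eq',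
    Finset.mem_univ, ↓reduceIte]
  ring

structure IsProjEMinimizer (P Q Ps : X × Y → ℝ) : Prop where
  isDist : IsDist Ps
  margX_eq : margX Ps = margX P
  margY_eq : margY Ps = margY P
  relEnt_eq : relEnt Ps Q = projE P Q

namespace IsProjEMinimizer

variable {P Q Ps : X × Y → ℝ}

theorem pos (h : IsProjEMinimizer P Q Ps) (hP : ∀ z, 0 < P z) (hQ : IsPos Q) :
    ∀ z, 0 < Ps z := by
  by_contra! ⟨z₀, hz₀⟩
  replace hz₀ : Ps z₀ = 0 := le_antisymm hz₀ (h.isDist.1 z₀)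
  obtain ⟨t, ⟨ht0, ht1⟩, ht⟩ : ∃ t ∈ Set.Ioo (0 : ℝ) 1,
      relEnt P Q - relEnt Ps Q + P z₀ * log t < 0 :=
    (Eventually.and (Ioo_mem_nhdsGT one_pos) ((tendsto_atBot_add_const_left _ _
      (tendsto_log_nhdsGT_zero.const_mul_atBot (hP z₀))).eventually
        (eventually_lt_atBot 0))).exists
  set R := (1 - t) • Ps + t • P
  have hR : ∀ z, 0 ≤ R z := fun z => by
    have := h.isDist.1 z
    have := (hP z).le
    simp only [R, Pi.add_apply, Pi.smul_apply, smul_eq_mul]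
    nlinarith
  have hX : margX R = margX P := by
    rw [margX_add, margX_smul, margX_smul, h.margX_eq, ← add_smul, sub_add_cancel, one_smul]
  have hY : margY R = margY P := by
    rw [margY_add, margY_smul, margY_smul, h.margY_eq, ← add_smul, sub_add_cancel, one_smul]
  have hle := projE_le_relEnt hQ (isDist_of_margX_eq hR h.isDist (hX.trans h.margX_eq.symm)) hX hY
  have hmix := relEnt_convexComb_le h.isDist.1 (fun z => (hP z).le) hQ.1 ht0 ht1.le hz₀
  rw [← h.relEnt_eq] at hle
  nlinarith [mul_neg_of_pos_of_neg ht0 ht]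

theorem sum_mul_log_div_eq_zero (h : IsProjEMinimizer P Q Ps) (hQ : IsPos Q)
    (hpos : ∀ z, 0 < Ps z) {v : X × Y → ℝ} (hvX : margX v = 0) (hvY : margY v = 0) :
    ∑ z, v z * log (Ps z / Q z) = 0 := by
  have hv : ∑ z, v z = 0 := by
    rw [Fintype.sum_prod_type]
    exact Finset.sum_eq_zero fun x _ => congrFun hvX x
  -- along `Ps + t • v`, the chain rule and the `χ²` bound give
  -- `D(Ps + t • v ‖ Q) ≤ D(Ps ‖ Q) + t * ∑ v ȷ + t ^ 2 * ∑ v ^ 2 / Ps`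
  refine eq_zero_of_eventually_nonneg_mul_sq_add_mul (C := ∑ z, v z ^ 2 / Ps z) ?_
  have hnn : ∀ᶠ t in 𝓝 (0 : ℝ), ∀ z, 0 ≤ Ps z + t * v z := eventually_all.2 fun z =>
    (((continuous_const.add (continuous_id.mul continuous_const)).tendsto' 0 (Ps z)
      (by simp)).eventually_const_lt (hpos z)).mono fun _ => le_of_lt
  filter_upwards [hnn] with t ht
  have hX : margX (Ps + t • v) = margX P := by
    rw [margX_add, margX_smul, hvX, smul_zero, add_zero, h.margX_eq]
  have hY : margY (Ps + t • v) = margY P := by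
    rw [margY_add, margY_smul, hvY, smul_zero, add_zero, h.margY_eq]
  have hle := projE_le_relEnt hQ
    (isDist_of_margX_eq (R := Ps + t • v) ht h.isDist (hX.trans h.margX_eq.symm)) hX hY
  have hup := relEnt_add_le (D := t • v) hpos hQ.1 ht (by simp [← Finset.mul_sum, hv])
  simp only [Pi.smul_apply, smul_eq_mul, mul_pow, mul_assoc, mul_div_assoc,
    ← Finset.mul_sum] at hup
  rw [← h.relEnt_eq] at hle
  linarith

theorem sameCorr [Nonempty X] [Nonempty Y] (h : IsProjEMinimizer P Q Ps) (hP : ∀ z, 0 < P z)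
    (hQ : IsPos Q) : SameCorr Ps Q := by
  have hrect (x x' : X) (y y' : Y) :
      log (Ps (x, y) / Q (x, y)) - log (Ps (x, y') / Q (x, y'))
        - log (Ps (x', y) / Q (x', y)) + log (Ps (x', y') / Q (x', y')) = 0 := by
    rw [← sum_rectDir_mul x x' y y' fun z => log (Ps z / Q z)]
    exact h.sum_mul_log_div_eq_zero hQ (h.pos hP hQ) (margX_rectDir ..) (margY_rectDir ..)
  obtain ⟨x₀⟩ := ‹Nonempty X›
  obtain ⟨y₀⟩ := ‹Nonempty Y›
  exact ⟨fun x => log (Ps (x, y₀) / Q (x, y₀)),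
    fun y => log (Ps (x₀, y) / Q (x₀, y)) - log (Ps (x₀, y₀) / Q (x₀, y₀)),
    fun x y => by linarith [hrect x x₀ y y₀]⟩

theorem projE_le {Pbar : X × Y → ℝ} (h : IsProjEMinimizer P Q Ps) (hQ : IsPos Q)
    (hpos : ∀ z, 0 < Ps z) (hc : SameCorr Ps Q) (hPbar : IsDist Pbar)
    (hnn : ∀ z, 0 ≤ Ps z + (Pbar z - P z)) :
    projE Pbar Q ≤ ∑ z, Pbar z * log (Ps z / Q z) + ∑ z, (Pbar z - P z) ^ 2 / Ps z := by
  have hX : margX (Ps + (Pbar - P)) = margX Pbar := by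
    rw [margX_add, margX_sub, h.margX_eq, add_sub_cancel]
  have hY : margY (Ps + (Pbar - P)) = margY Pbar := by
    rw [margY_add, margY_sub, h.margY_eq, add_sub_cancel]
  have hD : ∑ z, (Pbar - P) z = 0 := by
    simp only [Pi.sub_apply, Finset.sum_sub_distrib, ← sum_eq_of_margX_eq h.margX_eq, hPbar.2,
      h.isDist.2, sub_self]
  have hlin : relEnt Ps Q + ∑ z, (Pbar - P) z * log (Ps z / Q z)
      = ∑ z, Pbar z * log (Ps z / Q z) := by
    simp only [Pi.sub_apply, sub_mul, Finset.sum_sub_distrib]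
    rw [relEnt, hc.sum_mul_log_div_eq h.margX_eq h.margY_eq]
    ring
  calc projE Pbar Q ≤ relEnt (Ps + (Pbar - P)) Q :=
        projE_le_relEnt hQ (isDist_of_margX_eq hnn hPbar hX) hX hY
    _ ≤ _ := relEnt_add_le hpos hQ.1 hnn hD
    _ = _ := by rw [hlin]; rfl

end IsProjEMinimizer

/-- first-order Taylor approximation of the projected relative
entropy around `P` via the projected relative entropy density. -/
theorem projE_first_order_approximation
    [Nonempty X] [Nonempty Y]
    (P Q Ps : X × Y → ℝ) (hP : IsPos P) (hQ : IsPos Q)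
    (hPs : IsDist Ps) (hPsX : margX Ps = margX P) (hPsY : margY Ps = margY P)
    (hmin : relEnt Ps Q = projE P Q)
    (j : X × Y → ℝ) (hj : ∀ z : X × Y, j z = Real.log (Ps z / Q z)) :
    ∀ ε : ℝ, 0 < ε → ∃ δ : ℝ, 0 < δ ∧
      ∀ Pbar : X × Y → ℝ, IsDist Pbar →
        (∑ z : X × Y, |Pbar z - P z|) < δ →
        |projE Pbar Q - ∑ z : X × Y, Pbar z * j z|
          ≤ ε * ∑ z : X × Y, |Pbar z - P z| := by
  have h : IsProjEMinimizer P Q Ps := ⟨hPs, hPsX, hPsY, hmin⟩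
  have hpos := h.pos hP.1 hQ
  have hc := h.sameCorr hP.1 hQ
  obtain ⟨zm, hzm⟩ := Finite.exists_min Ps
  intro ε hε
  refine ⟨min (Ps zm) (ε * Ps zm), lt_min (hpos zm) (mul_pos hε (hpos zm)),
    fun Pbar hPbar hδ => ?_⟩
  set n := ∑ z, |Pbar z - P z|
  have hn : 0 ≤ n := Finset.sum_nonneg fun z _ => abs_nonneg _
  have hnn (z : X × Y) : 0 ≤ Ps z + (Pbar z - P z) := by
    have := Finset.single_le_sum (fun z _ => abs_nonneg (Pbar z - P z)) (Finset.mem_univ z)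
    linarith [neg_abs_le (Pbar z - P z), hzm z, min_le_left (Ps zm) (ε * Ps zm)]
  have hsq : ∑ z, (Pbar z - P z) ^ 2 / Ps z ≤ ε * n := calc
    _ ≤ n ^ 2 / Ps zm := sum_sq_div_le_sq_sum_abs_div (hpos zm) hzm
    _ ≤ ε * n := by
        rw [div_le_iff₀ (hpos zm)]
        nlinarith [min_le_right (Ps zm) (ε * Ps zm)]
  have hlow := sum_mul_log_div_le_projE ⟨hpos, hPs.2⟩ hQ.1 hc hPbar
  have hup := h.projE_le hQ hpos hc hPbar hnn
  simp only [hj]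
  rw [abs_le]
  constructor <;> linarith
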